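/- The four-qubit hypergraph state |V₁₈⟩, defined by coefficients c_{i₁i₂i₃i₄} = −1 when i₁ = i₂ = 1 and (i₃,i₄) ≠ (1,1), and c_{i₁i₂i₃i₄} = 1 otherwise, is SLOCC-equivalent to the state |μ⟩ = |0000⟩ + |1100⟩ + |1111⟩. -/

import Mathlib

/-!
With `|+⟩ = |0⟩ + |1⟩`, the hypergraph state is a sum of three product states,
`|V₁₈⟩ = |++++⟩ - 2 |11++⟩ + 2 |1111⟩`. Each local operator used below sends `|+⟩` to `|0⟩`
and `|1⟩` to a nonzero multiple of `|1⟩` (namely `1`, `-1/2`, `1`, `-1`); absorbing the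
scalars `-2` and `-1` into the second and fourth tensor factors, the three terms land exactly on
`|0000⟩`, `|1100⟩` and `|1111⟩`.
-/

/-- The four-qubit state `|μ⟩ = |0000⟩ + |1100⟩ + |1111⟩`. -/
noncomputable def muState : Fin 2 × Fin 2 × Fin 2 × Fin 2 → ℂ :=
  fun x => if x = (0, 0, 0, 0) ∨ x = (1, 1, 0, 0) ∨ x = (1, 1, 1, 1) then 1 else 0

/-- The four-qubit hypergraph state `|V₁₈⟩`: coefficient `-1` when `i₁ = i₂ = 1` and
`(i₃, i₄) ≠ (1, 1)`, and `1` otherwise. -/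
noncomputable def V18 : Fin 2 × Fin 2 × Fin 2 × Fin 2 → ℂ :=
  fun x => if x.1 = 1 ∧ x.2.1 = 1 ∧ ¬(x.2.2.1 = 1 ∧ x.2.2.2 = 1) then -1 else 1

open Matrix

section LocalAction

variable {R : Type*} [CommSemiring R]
  {ι₁ ι₂ ι₃ ι₄ κ₁ κ₂ κ₃ κ₄ : Type*} [Fintype ι₁] [Fintype ι₂] [Fintype ι₃] [Fintype ι₄]

def productState (u₁ : ι₁ → R) (u₂ : ι₂ → R) (u₃ : ι₃ → R) (u₄ : ι₄ → R) :
    ι₁ × ι₂ × ι₃ × ι₄ → R :=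
  fun x => u₁ x.1 * u₂ x.2.1 * u₃ x.2.2.1 * u₄ x.2.2.2

def localAction (A₁ : Matrix κ₁ ι₁ R) (A₂ : Matrix κ₂ ι₂ R) (A₃ : Matrix κ₃ ι₃ R)
    (A₄ : Matrix κ₄ ι₄ R) : (ι₁ × ι₂ × ι₃ × ι₄ → R) →ₗ[R] (κ₁ × κ₂ × κ₃ × κ₄ → R) where
  toFun ψ x := ∑ a, ∑ b, ∑ c, ∑ d,
    A₁ x.1 a * A₂ x.2.1 b * A₃ x.2.2.1 c * A₄ x.2.2.2 d * ψ (a, b, c, d)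
  map_add' ψ φ := by
    ext x
    simp only [Pi.add_apply, mul_add, Finset.sum_add_distrib]
  map_smul' r ψ := by
    ext x
    simp only [Pi.smul_apply, smul_eq_mul, RingHom.id_apply, Finset.mul_sum, mul_left_comm _ r]

theorem localAction_productState (A₁ : Matrix κ₁ ι₁ R) (A₂ : Matrix κ₂ ι₂ R)
    (A₃ : Matrix κ₃ ι₃ R) (A₄ : Matrix κ₄ ι₄ R) (u₁ : ι₁ → R) (u₂ : ι₂ → R) (u₃ : ι₃ → R)
    (u₄ : ι₄ → R) :
    localAction A₁ A₂ A₃ A₄ (productState u₁ u₂ u₃ u₄) =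
      productState (A₁ *ᵥ u₁) (A₂ *ᵥ u₂) (A₃ *ᵥ u₃) (A₄ *ᵥ u₄) := by
  ext x
  simp only [localAction, productState, LinearMap.coe_mk, AddHom.coe_mk, mulVec, dotProduct]
  have regroup (a b c d) : A₁ x.1 a * A₂ x.2.1 b * A₃ x.2.2.1 c * A₄ x.2.2.2 d *
      (u₁ a * u₂ b * u₃ c * u₄ d) =
      A₁ x.1 a * u₁ a * (A₂ x.2.1 b * u₂ b * (A₃ x.2.2.1 c * u₃ c * (A₄ x.2.2.2 d * u₄ d))) := by
    ring
  simp only [regroup, ← Finset.mul_sum, ← Finset.sum_mul]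
  ring

end LocalAction

theorem V18_eq_sum_productState :
    V18 = productState ![1, 1] ![1, 1] ![1, 1] ![1, 1] +
      productState ![0, 1] ![0, -2] ![1, 1] ![1, 1] +
      productState ![0, 1] ![0, -2] ![0, 1] ![0, -1] := by
  funext ⟨a, b, c, d⟩
  fin_cases a <;> fin_cases b <;> fin_cases c <;> fin_cases d <;>
    norm_num [V18, productState]

theorem muState_eq_sum_productState :
    muState = productState ![1, 0] ![1, 0] ![1, 0] ![1, 0] +
      productState ![0, 1] ![0, 1] ![1, 0] ![1, 0] +
      productState ![0, 1] ![0, 1] ![0, 1] ![0, 1] := by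
  funext ⟨a, b, c, d⟩
  fin_cases a <;> fin_cases b <;> fin_cases c <;> fin_cases d <;>
    simp [muState, productState]

theorem localAction_V18 :
    localAction !![1, 0; -1, 1] !![1, 0; 1/2, -1/2] !![1, 0; -1, 1] !![1, 0; 1, -1] V18 =
      muState := by
  rw [V18_eq_sum_productState, map_add, map_add, localAction_productState,
    localAction_productState, localAction_productState, muState_eq_sum_productState]
  norm_num [-mulVec_cons]

/-- `|V₁₈⟩` is SLOCC-equivalent to `|μ⟩ = |0000⟩ + |1100⟩ + |1111⟩`. -/
theorem v18_slocc_equiv_mu :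
    ∃ A₁ A₂ A₃ A₄ : Matrix (Fin 2) (Fin 2) ℂ,
      IsUnit A₁ ∧ IsUnit A₂ ∧ IsUnit A₃ ∧ IsUnit A₄ ∧
      ∀ i j k l : Fin 2,
        muState (i, j, k, l) =
          ∑ a : Fin 2, ∑ b : Fin 2, ∑ c : Fin 2, ∑ d : Fin 2,
            A₁ i a * A₂ j b * A₃ k c * A₄ l d * V18 (a, b, c, d) := by
  refine ⟨_, _, _, _, ?_, ?_, ?_, ?_, fun i j k l => (congrFun localAction_V18 (i, j, k, l)).symm⟩
  all_goals simp [isUnit_iff_isUnit_det, det_fin_two_of]
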